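/- arXiv:1606.01172 — 7 statements merged into one kernel-verified Lean document; each statement's English description precedes it below -/
import Mathlib

section
/- Let Σ be a finite nonempty alphabet, μ a spherical ensemble of probability measures on Σ*, and S, F ⊆ Σ*. Assume there are a real constant C > 0 and a natural number c such that μ_i(S) ≥ 1/(C·i^c) for every i ≥ 1 with μ_i(S) ≠ 0. If for every k ∈ ℕ, lim_{i→∞} i^k · μ_i(F) = 0, then also for every k ∈ ℕ, lim_{i→∞} i^k · μ^S_i(F) = 0. -/
/-- The measure `μ_n(T) = Σ_{x ∈ T ∩ Σ^n} μ_n(x)` of a set of words, where words of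
length `n` are represented as `List.ofFn w` for `w : Fin n → A`. -/
noncomputable def sphMeasure {A : Type*} [Fintype A]
    (μ : ℕ → List A → ℝ) (n : ℕ) (T : Set (List A)) : ℝ :=
  ∑ w : Fin n → A, Set.indicator T (μ n) (List.ofFn w)

/-- Let `Σ` (here `A`) be a finite nonempty alphabet, `μ` a spherical
ensemble of probability measures on `Σ*`, and `S, F ⊆ Σ*`.  Assume there are `C > 0`
and `c ∈ ℕ` with `μ_i(S) ≥ 1/(C·i^c)` for every `i ≥ 1` with `μ_i(S) ≠ 0`.  If for
every `k`, `i^k · μ_i(F) → 0`, then also for every `k`, `i^k · μ^S_i(F) → 0`. -/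
theorem induced_measure_strongly_negligible
    {A : Type*} [Fintype A] [Nonempty A]
    (μ : ℕ → List A → ℝ)
    (hμpos : ∀ n : ℕ, 1 ≤ n → ∀ x : List A, x.length = n → 0 ≤ μ n x)
    (hμsum : ∀ n : ℕ, 1 ≤ n → ∑ w : Fin n → A, μ n (List.ofFn w) = 1)
    (S F : Set (List A))
    (μS : ℕ → List A → ℝ)
    (hμS₁ : ∀ (n : ℕ) (x : List A), x.length = n → sphMeasure μ n S ≠ 0 →
      μS n x = Set.indicator S (μ n) x / sphMeasure μ n S)
    (hμS₂ : ∀ (n : ℕ) (x : List A), x.length = n → sphMeasure μ n S = 0 →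
      μS n x = μ n x)
    (C : ℝ) (hC : 0 < C) (c : ℕ)
    (hS : ∀ i : ℕ, 1 ≤ i → sphMeasure μ i S ≠ 0 →
      1 / (C * (i : ℝ) ^ c) ≤ sphMeasure μ i S)
    (hF : ∀ k : ℕ,
      Filter.Tendsto (fun i : ℕ => (i : ℝ) ^ k * sphMeasure μ i F)
        Filter.atTop (nhds 0)) :
    ∀ k : ℕ,
      Filter.Tendsto (fun i : ℕ => (i : ℝ) ^ k * sphMeasure μS i F)
        Filter.atTop (nhds 0) := by
  intro k
  have key : ∀ i : ℕ, 1 ≤ i →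
      0 ≤ sphMeasure μS i F ∧
      sphMeasure μS i F ≤ (C + 1) * (i : ℝ) ^ c * sphMeasure μ i F := by
    intro i hi
    have hi1 : (1 : ℝ) ≤ (i : ℝ) := by exact_mod_cast hi
    have hic : (1 : ℝ) ≤ (i : ℝ) ^ c := one_le_pow₀ hi1
    have hμF0 : 0 ≤ sphMeasure μ i F := by
      apply Finset.sum_nonneg
      intro w _
      exact Set.indicator_apply_nonneg (fun _ => hμpos i hi _ (by simp))
    by_cases hm : sphMeasure μ i S = 0
    · have heq : sphMeasure μS i F = sphMeasure μ i F := by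
        apply Finset.sum_congr rfl
        intro w _
        have hx : μS i (List.ofFn w) = μ i (List.ofFn w) :=
          hμS₂ i _ (by simp) hm
        by_cases h : List.ofFn w ∈ F <;> simp [Set.indicator, h, hx]
      refine ⟨heq ▸ hμF0, heq ▸ ?_⟩
      have h1 : (1 : ℝ) ≤ (C + 1) * (i : ℝ) ^ c := by nlinarith
      nlinarith
    · have hmpos : 0 < sphMeasure μ i S := by
        have := hS i hi hm
        have h0 : 0 < 1 / (C * (i : ℝ) ^ c) := by positivity
        linarith
      have hinv : 1 / sphMeasure μ i S ≤ C * (i : ℝ) ^ c := by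
        rw [div_le_iff₀ hmpos]
        have := hS i hi hm
        calc (1 : ℝ) = (C * (i:ℝ)^c) * (1 / (C * (i:ℝ)^c)) := by
              field_simp
          _ ≤ C * (i:ℝ)^c * sphMeasure μ i S := by
              apply mul_le_mul_of_nonneg_left (hS i hi hm) (by positivity)
      constructor
      · apply Finset.sum_nonneg
        intro w _
        apply Set.indicator_apply_nonneg
        intro _
        rw [hμS₁ i _ (by simp) hm]
        apply div_nonneg _ hmpos.le
        exact Set.indicator_apply_nonneg (fun _ => hμpos i hi _ (by simp))
      · have hterm : ∀ w : Fin i → A,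
            Set.indicator F (μS i) (List.ofFn w) ≤
              Set.indicator F (μ i) (List.ofFn w) / sphMeasure μ i S := by
          intro w
          by_cases h : List.ofFn w ∈ F
          · rw [Set.indicator_of_mem h, Set.indicator_of_mem h,
              hμS₁ i _ (by simp) hm]
            have hnum : Set.indicator S (μ i) (List.ofFn w) ≤ μ i (List.ofFn w) := by
              by_cases hs : List.ofFn w ∈ S
              · rw [Set.indicator_of_mem hs]
              · rw [Set.indicator_of_notMem hs]
                exact hμpos i hi _ (by simp)
            exact div_le_div_of_nonneg_right hnum hmpos.le
          · simp [Set.indicator_of_notMem h]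
        calc sphMeasure μS i F
            ≤ ∑ w : Fin i → A, Set.indicator F (μ i) (List.ofFn w) / sphMeasure μ i S :=
              Finset.sum_le_sum fun w _ => hterm w
          _ = sphMeasure μ i F * (1 / sphMeasure μ i S) := by
              rw [← Finset.sum_div]; unfold sphMeasure; ring
          _ ≤ sphMeasure μ i F * (C * (i:ℝ)^c) :=
              mul_le_mul_of_nonneg_left hinv hμF0
          _ ≤ (C + 1) * (i : ℝ) ^ c * sphMeasure μ i F := by nlinarith
  have hg : Filter.Tendsto (fun i : ℕ => (C + 1) * ((i : ℝ) ^ (k + c) * sphMeasure μ i F))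
      Filter.atTop (nhds 0) := by
    simpa using (hF (k + c)).const_mul (C + 1)
  apply squeeze_zero' (g := fun i : ℕ => (C + 1) * ((i : ℝ) ^ (k + c) * sphMeasure μ i F))
  · filter_upwards [Filter.eventually_ge_atTop 1] with i hi
    exact mul_nonneg (by positivity) (key i hi).1
  · filter_upwards [Filter.eventually_ge_atTop 1] with i hi
    have h := (key i hi).2
    have hk : (0:ℝ) ≤ (i:ℝ)^k := by positivity
    calc (i:ℝ)^k * sphMeasure μS i F
        ≤ (i:ℝ)^k * ((C + 1) * (i:ℝ)^c * sphMeasure μ i F) :=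
          mul_le_mul_of_nonneg_left h hk
      _ = (C + 1) * ((i:ℝ)^(k+c) * sphMeasure μ i F) := by ring
  · exact hg
end

section
/- Let Σ and Π be finite nonempty alphabets, let f : Σ* → Π* be size-invariant with f(ε) = ε, let μ be a spherical ensemble of probability measures on Σ*, and let ν be the f-transfer of μ. If a set H ⊆ Π* is strongly generic with respect to ν, then f^{-1}(H) is strongly generic with respect to μ. (This is the measure-theoretic content of the theorem that CS-reductions are SGPtime reductions.) -/
/-- Let `Σ` (here `A`) and `Π` (here `B`) be finite nonempty alphabets,
`f : Σ* → Π*` size-invariant with `f(ε) = ε`, `μ` a spherical ensemble of probability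
measures on `Σ*`, and `ν` the `f`-transfer of `μ`.  If `H ⊆ Π*` is strongly generic
with respect to `ν` (i.e. `ν_m(H) → 1` and `m^k·(1 − ν_m(H)) → 0` for every `k`),
then `f⁻¹(H)` is strongly generic with respect to `μ`.
(Measure-theoretic content of: CS-reductions are SGPtime reductions.) -/
theorem cs_reduction_strongly_generic
    {A B : Type*} [Fintype A] [Nonempty A] [Fintype B] [Nonempty B]
    (f : List A → List B)
    (hsize : ∀ x₁ x₂ : List A, x₁.length < x₂.length ↔ (f x₁).length < (f x₂).length)
    (hfe : f [] = [])
    (μ : ℕ → List A → ℝ)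
    (hμpos : ∀ n : ℕ, 1 ≤ n → ∀ x : List A, x.length = n → 0 ≤ μ n x)
    (hμsum : ∀ n : ℕ, 1 ≤ n → ∑ w : Fin n → A, μ n (List.ofFn w) = 1)
    (Sf : ℕ → ℕ) (hSf : ∀ x : List A, Sf x.length = (f x).length)
    (ν : ℕ → List B → ℝ)
    (hν₁ : ∀ (n : ℕ) (y : List B), y.length = Sf n →
      ν (Sf n) y = ∑ w : Fin n → A, Set.indicator {x : List A | f x = y} (μ n) (List.ofFn w))
    (hν₂ : ∀ (m : ℕ) (y : List B), y.length = m → (¬ ∃ n : ℕ, Sf n = m) →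
      ν m y = ((Fintype.card B : ℝ))⁻¹ ^ m)
    (H : Set (List B))
    (hH₁ : Filter.Tendsto (fun m : ℕ => sphMeasure ν m H) Filter.atTop (nhds 1))
    (hH₂ : ∀ k : ℕ,
      Filter.Tendsto (fun m : ℕ => (m : ℝ) ^ k * (1 - sphMeasure ν m H))
        Filter.atTop (nhds 0)) :
    Filter.Tendsto (fun n : ℕ => sphMeasure μ n (f ⁻¹' H)) Filter.atTop (nhds 1) ∧
    ∀ k : ℕ,
      Filter.Tendsto (fun n : ℕ => (n : ℝ) ^ k * (1 - sphMeasure μ n (f ⁻¹' H)))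
        Filter.atTop (nhds 0) := by
  classical
  -- length of f on words of length n
  have hlen : ∀ (n : ℕ) (w : Fin n → A), (f (List.ofFn w)).length = Sf n := by
    intro n w
    rw [← hSf]; simp
  -- Sf is strictly monotone
  have hmono : StrictMono Sf := by
    intro m n hmn
    obtain ⟨a⟩ := (inferInstance : Nonempty A)
    have h1 := hSf (List.replicate m a)
    have h2 := hSf (List.replicate n a)
    simp only [List.length_replicate] at h1 h2
    rw [h1, h2]
    exact (hsize (List.replicate m a) (List.replicate n a)).mp (by simpa using hmn)
  have hSftop : Filter.Tendsto Sf Filter.atTop Filter.atTop := hmono.tendsto_atTop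
  -- key identity: μ_n(f⁻¹ H) = ν_{Sf n}(H)
  have key : ∀ n : ℕ, sphMeasure ν (Sf n) H = sphMeasure μ n (f ⁻¹' H) := by
    intro n
    unfold sphMeasure
    calc ∑ y : Fin (Sf n) → B, Set.indicator H (ν (Sf n)) (List.ofFn y)
        = ∑ y : Fin (Sf n) → B, ∑ w : Fin n → A,
            (if List.ofFn y ∈ H then
              (if f (List.ofFn w) = List.ofFn y then μ n (List.ofFn w) else 0) else 0) := by
          refine Finset.sum_congr rfl fun y _ => ?_
          rw [Set.indicator_apply]
          by_cases hy : List.ofFn y ∈ H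
          · simp only [hy, if_true]
            rw [hν₁ n (List.ofFn y) (by simp)]
            refine Finset.sum_congr rfl fun w _ => ?_
            rw [Set.indicator_apply]
            rfl
          · simp [hy]
      _ = ∑ w : Fin n → A, ∑ y : Fin (Sf n) → B,
            (if List.ofFn y ∈ H then
              (if f (List.ofFn w) = List.ofFn y then μ n (List.ofFn w) else 0) else 0) :=
          Finset.sum_comm
      _ = ∑ w : Fin n → A, Set.indicator (f ⁻¹' H) (μ n) (List.ofFn w) := by
          refine Finset.sum_congr rfl fun w _ => ?_
          have hl := hlen n w
          set y₀ : Fin (Sf n) → B := fun i => (f (List.ofFn w)).get (Fin.cast hl.symm i) with hy₀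
          have hofn : List.ofFn y₀ = f (List.ofFn w) := by
            apply List.ext_get (by simp [hl])
            intro i h1 h2
            simp [hy₀]
          have hstep : ∀ y : Fin (Sf n) → B,
              (if List.ofFn y ∈ H then
                (if f (List.ofFn w) = List.ofFn y then μ n (List.ofFn w) else 0) else 0)
              = (if y = y₀ then
                  (if List.ofFn w ∈ f ⁻¹' H then μ n (List.ofFn w) else 0) else 0) := by
            intro y
            by_cases hyy : y = y₀
            · subst hyy
              simp only [if_pos rfl, hofn]
              by_cases hh : f (List.ofFn w) ∈ H
              · simp [hh, Set.mem_preimage]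
              · simp [hh, Set.mem_preimage]
            · rw [if_neg hyy]
              by_cases hh : List.ofFn y ∈ H
              · rw [if_pos hh, if_neg]
                intro hc
                apply hyy
                apply List.ofFn_injective
                rw [hofn, hc]
              · rw [if_neg hh]
          rw [Finset.sum_congr rfl fun y _ => hstep y, Finset.sum_ite_eq' Finset.univ y₀,
            if_pos (Finset.mem_univ _), Set.indicator_apply]
  -- bounds for Sf n ≥ n etc.
  have hub : ∀ n : ℕ, 1 ≤ n → sphMeasure μ n (f ⁻¹' H) ≤ 1 := by
    intro n hn
    rw [← hμsum n hn]
    unfold sphMeasure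
    refine Finset.sum_le_sum fun w _ => ?_
    exact Set.indicator_apply_le' (fun _ => le_refl _)
      (fun _ => hμpos n hn _ (by simp))
  have hlb : ∀ n : ℕ, 1 ≤ n → 0 ≤ sphMeasure μ n (f ⁻¹' H) := by
    intro n hn
    refine Finset.sum_nonneg fun w _ => ?_
    exact Set.indicator_apply_nonneg fun _ => hμpos n hn _ (by simp)
  constructor
  · have := hH₁.comp hSftop
    refine this.congr fun n => ?_
    exact key n
  · intro k
    have hupper := (hH₂ k).comp hSftop
    refine tendsto_of_tendsto_of_tendsto_of_le_of_le' tendsto_const_nhds hupper ?_ ?_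
    · filter_upwards [Filter.eventually_ge_atTop 1] with n hn
      have h1 := hub n hn
      exact mul_nonneg (by positivity) (by linarith)
    · filter_upwards [Filter.eventually_ge_atTop 1] with n hn
      simp only [Function.comp_apply, key n]
      have h1 : (0:ℝ) ≤ 1 - sphMeasure μ n (f ⁻¹' H) := by linarith [hub n hn]
      have h2 : (n:ℝ)^k ≤ (Sf n : ℝ)^k := by
        have : n ≤ Sf n := hmono.le_apply
        exact pow_le_pow_left₀ (by positivity) (by exact_mod_cast this) k
      exact mul_le_mul_of_nonneg_right h2 h1
end

section
/- Let Σ and Π be finite nonempty alphabets, μ and ν spherical ensembles of probability measures on Σ* and Π* respectively, and f : Σ* → Π* an injective map with |f(x)| = |x| for all x. Suppose d : ℕ → ℝ takes positive values and ν_{|x|}(f(x)) ≥ μ_{|x|}(x)/d(|x|) for every nonempty word x ∈ Σ*. If H ⊆ Π* satisfies lim_{k→∞} d(k)·(1 − ν_k(H)) = 0, then f^{-1}(H) is generic with respect to μ. (This is the measure-theoretic content of part (a) of the theorem that CM-reductions are SGPtime reductions.) -/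
lemma sphMeasure_add_compl {A : Type*} [Fintype A]
    (μ : ℕ → List A → ℝ) (n : ℕ) (T : Set (List A))
    (hsum : ∑ w : Fin n → A, μ n (List.ofFn w) = 1) :
    sphMeasure μ n T + sphMeasure μ n Tᶜ = 1 := by
  unfold sphMeasure
  rw [← Finset.sum_add_distrib, ← hsum]
  refine Finset.sum_congr rfl fun w _ => ?_
  by_cases h : List.ofFn w ∈ T
  · rw [Set.indicator_of_mem h, Set.indicator_of_notMem (by simpa using h)]; ring
  · rw [Set.indicator_of_notMem h, Set.indicator_of_mem (by simpa using h)]; ring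

/-- Let `Σ` (here `A`) and `Π` (here `B`) be finite nonempty alphabets,
`μ`, `ν` spherical ensembles of probability measures on `Σ*`, `Π*`, and
`f : Σ* → Π*` injective with `|f(x)| = |x|`.  Suppose `d : ℕ → ℝ` takes positive
values and `ν_{|x|}(f(x)) ≥ μ_{|x|}(x)/d(|x|)` for every nonempty word `x`.  If
`H ⊆ Π*` satisfies `d(k)·(1 − ν_k(H)) → 0`, then `f⁻¹(H)` is generic with respect
to `μ`.  (Measure-theoretic content of part (a) of: CM-reductions are SGPtime
reductions.) -/
theorem cm_reduction_generic
    {A B : Type*} [Fintype A] [Nonempty A] [Fintype B] [Nonempty B]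
    (μ : ℕ → List A → ℝ) (ν : ℕ → List B → ℝ)
    (hμpos : ∀ n : ℕ, 1 ≤ n → ∀ x : List A, x.length = n → 0 ≤ μ n x)
    (hμsum : ∀ n : ℕ, 1 ≤ n → ∑ w : Fin n → A, μ n (List.ofFn w) = 1)
    (hνpos : ∀ n : ℕ, 1 ≤ n → ∀ y : List B, y.length = n → 0 ≤ ν n y)
    (hνsum : ∀ n : ℕ, 1 ≤ n → ∑ w : Fin n → B, ν n (List.ofFn w) = 1)
    (f : List A → List B)
    (hinj : Function.Injective f)
    (hlen : ∀ x : List A, (f x).length = x.length)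
    (d : ℕ → ℝ) (hd : ∀ k : ℕ, 0 < d k)
    (hcm : ∀ x : List A, x ≠ [] → μ x.length x / d x.length ≤ ν x.length (f x))
    (H : Set (List B))
    (hH : Filter.Tendsto (fun k : ℕ => d k * (1 - sphMeasure ν k H))
      Filter.atTop (nhds 0)) :
    Filter.Tendsto (fun k : ℕ => sphMeasure μ k (f ⁻¹' H)) Filter.atTop (nhds 1) := by
  -- key bound for k ≥ 1
  have key : ∀ k : ℕ, 1 ≤ k →
      0 ≤ 1 - sphMeasure μ k (f ⁻¹' H) ∧
      1 - sphMeasure μ k (f ⁻¹' H) ≤ d k * (1 - sphMeasure ν k H) := by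
    intro k hk
    classical
    have hμc : 1 - sphMeasure μ k (f ⁻¹' H) = sphMeasure μ k (f ⁻¹' H)ᶜ := by
      have := sphMeasure_add_compl μ k (f ⁻¹' H) (hμsum k hk)
      linarith
    have hνc : 1 - sphMeasure ν k H = sphMeasure ν k Hᶜ := by
      have := sphMeasure_add_compl ν k H (hνsum k hk)
      linarith
    -- the map on coordinate functions
    have hlen' : ∀ w : Fin k → A, (f (List.ofFn w)).length = k := fun w => by
      rw [hlen]; simp
    set g : (Fin k → A) → (Fin k → B) := fun w i =>
      (f (List.ofFn w)).get (Fin.cast (hlen' w).symm i) with hg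
    have hgofn : ∀ w : Fin k → A, List.ofFn (g w) = f (List.ofFn w) := by
      intro w
      apply List.ext_getElem
      · simp [hlen' w]
      · intro i h1 h2
        simp [hg, List.getElem_ofFn, List.get_eq_getElem]
    have hginj : Function.Injective g := by
      intro w v hwv
      have : List.ofFn (g w) = List.ofFn (g v) := by rw [hwv]
      rw [hgofn, hgofn] at this
      have := hinj this
      exact List.ofFn_injective this
    rw [hμc, hνc]
    constructor
    · apply Finset.sum_nonneg
      intro w _
      exact Set.indicator_apply_nonneg (fun _ => hμpos k hk _ (by simp))
    · unfold sphMeasure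
      rw [Finset.mul_sum]
      calc ∑ w : Fin k → A, Set.indicator (f ⁻¹' H)ᶜ (μ k) (List.ofFn w)
          ≤ ∑ w : Fin k → A, d k * Set.indicator Hᶜ (ν k) (List.ofFn (g w)) := by
            refine Finset.sum_le_sum fun w _ => ?_
            by_cases hw : f (List.ofFn w) ∈ H
            · rw [Set.indicator_of_notMem (by simpa using hw)]
              rw [hgofn, Set.indicator_of_notMem (by simpa using hw)]
              simp
            · rw [Set.indicator_of_mem (by simpa using hw)]
              rw [hgofn, Set.indicator_of_mem (by simpa using hw)]
              have hne : List.ofFn w ≠ [] := by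
                intro h
                have : k = 0 := by simpa using congrArg List.length h
                omega
              have := hcm (List.ofFn w) hne
              rw [List.length_ofFn] at this
              rw [div_le_iff₀ (hd k)] at this
              linarith
        _ = ∑ v ∈ Finset.image g Finset.univ, d k * Set.indicator Hᶜ (ν k) (List.ofFn v) := by
            rw [Finset.sum_image (fun a _ b _ h => hginj h)]
        _ ≤ ∑ v : Fin k → B, d k * Set.indicator Hᶜ (ν k) (List.ofFn v) := by
            apply Finset.sum_le_sum_of_subset_of_nonneg (Finset.subset_univ _)
            intro v _ _
            exact mul_nonneg (hd k).le
              (Set.indicator_apply_nonneg (fun _ => hνpos k hk _ (by simp)))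
  have h0 : Filter.Tendsto (fun k : ℕ => 1 - sphMeasure μ k (f ⁻¹' H))
      Filter.atTop (nhds 0) := by
    apply squeeze_zero' (Filter.eventually_atTop.mpr ⟨1, fun k hk => (key k hk).1⟩)
      (Filter.eventually_atTop.mpr ⟨1, fun k hk => (key k hk).2⟩) hH
  have := h0.const_sub 1
  simpa using this
end

section
/- Let Σ and Π be finite nonempty alphabets, μ and ν spherical ensembles of probability measures on Σ* and Π* respectively, and f : Σ* → Π* an injective map with |f(x)| = |x| for all x. Suppose there are a real constant C > 0 and a natural number c such that, with d(k) := C·k^c, one has ν_{|x|}(f(x)) ≥ μ_{|x|}(x)/d(|x|) for every nonempty word x ∈ Σ*. If H ⊆ Π* is strongly generic with respect to ν, then f^{-1}(H) is strongly generic with respect to μ. (This is the measure-theoretic content of part (b) of the theorem that CM-reductions are SGPtime reductions.) -/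
/-!
Within each length `n`, `f` maps the words outside `f⁻¹(H)` injectively to words outside `H`,
and each such word keeps at least the fraction `1 / (C n^c)` of its mass. Hence
`1 - μ_n(f⁻¹H) ≤ C n^c (1 - ν_n(H))`, and multiplying by the polynomial `C n^c` does not
destroy superpolynomial decay.
-/

open Filter Asymptotics

theorem Fintype.sum_comp_le_sum_of_injective {ι κ M : Type*} [Fintype ι] [Fintype κ]
    [AddCommMonoid M] [Preorder M] [AddLeftMono M] {g : ι → κ} (hg : Function.Injective g)
    {f : κ → M} (hf : ∀ y, 0 ≤ f y) : ∑ x, f (g x) ≤ ∑ y, f y := by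
  classical
  rw [← Finset.sum_image hg.injOn]
  exact Finset.sum_le_univ_sum_of_nonneg hf

section sphMeasure

variable {A B : Type*} [Fintype A] [Fintype B] (μ : ℕ → List A → ℝ) (ν : ℕ → List B → ℝ)
  (n : ℕ)

theorem sphMeasure_eq_sum_vector (T : Set (List A)) :
    sphMeasure μ n T = ∑ v : List.Vector A n, T.indicator (μ n) v.toList :=
  Fintype.sum_equiv (Equiv.vectorEquivFin A n).symm _ _ fun w => by
    rw [Equiv.vectorEquivFin, Equiv.coe_fn_symm_mk, List.Vector.toList_ofFn]

theorem sphMeasure_nonneg (hμ : ∀ x : List A, x.length = n → 0 ≤ μ n x) (T : Set (List A)) :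
    0 ≤ sphMeasure μ n T :=
  Finset.sum_nonneg fun _ _ => Set.indicator_nonneg (fun _ _ => hμ _ (List.length_ofFn ..)) _

theorem one_sub_sphMeasure (hμ : ∑ w : Fin n → A, μ n (List.ofFn w) = 1) (T : Set (List A)) :
    1 - sphMeasure μ n T = sphMeasure μ n Tᶜ := by
  rw [sub_eq_iff_eq_add', sphMeasure, sphMeasure, ← Finset.sum_add_distrib, ← hμ]
  exact Finset.sum_congr rfl fun _ _ => (Set.indicator_self_add_compl_apply T (μ n) _).symm

theorem sphMeasure_preimage_le {f : List A → List B} (hinj : Function.Injective f)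
    (hlen : ∀ x : List A, (f x).length = x.length) {D : ℝ} (hD : 0 ≤ D)
    (hν : ∀ y : List B, y.length = n → 0 ≤ ν n y)
    (hμν : ∀ x : List A, x.length = n → μ n x ≤ D * ν n (f x)) (T : Set (List B)) :
    sphMeasure μ n (f ⁻¹' T) ≤ D * sphMeasure ν n T := by
  let F : List.Vector A n → List.Vector B n := fun v => ⟨f v.toList, (hlen _).trans v.2⟩
  have hF : Function.Injective F := fun v w h => Subtype.ext (hinj (congrArg Subtype.val h))
  rw [sphMeasure_eq_sum_vector, sphMeasure_eq_sum_vector, Finset.mul_sum]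
  calc ∑ v : List.Vector A n, (f ⁻¹' T).indicator (μ n) v.toList
      ≤ ∑ v, D * T.indicator (ν n) (F v).toList := by
        refine Finset.sum_le_sum fun v _ => ?_
        by_cases hv : f v.toList ∈ T
        · simpa [Set.indicator_of_mem, hv, F] using hμν v.toList v.toList_length
        · simp [Set.indicator_of_notMem, hv, F]
    _ ≤ ∑ w : List.Vector B n, D * T.indicator (ν n) w.toList :=
        Fintype.sum_comp_le_sum_of_injective hF fun w =>
          mul_nonneg hD (Set.indicator_nonneg (fun _ _ => hν _ w.toList_length) _)

end sphMeasure

theorem cm_reduction_strongly_generic_general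
    {A B : Type*} [Fintype A] [Fintype B]
    (μ : ℕ → List A → ℝ) (ν : ℕ → List B → ℝ)
    (hμpos : ∀ n : ℕ, 1 ≤ n → ∀ x : List A, x.length = n → 0 ≤ μ n x)
    (hμsum : ∀ n : ℕ, 1 ≤ n → ∑ w : Fin n → A, μ n (List.ofFn w) = 1)
    (hνpos : ∀ n : ℕ, 1 ≤ n → ∀ y : List B, y.length = n → 0 ≤ ν n y)
    (hνsum : ∀ n : ℕ, 1 ≤ n → ∑ w : Fin n → B, ν n (List.ofFn w) = 1)
    (f : List A → List B)
    (hinj : Function.Injective f)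
    (hlen : ∀ x : List A, (f x).length = x.length)
    (C : ℝ) (hC : 0 < C) (c : ℕ)
    (hcm : ∀ x : List A, x ≠ [] →
      μ x.length x / (C * (x.length : ℝ) ^ c) ≤ ν x.length (f x))
    (H : Set (List B))
    (hH₂ : ∀ k : ℕ,
      Filter.Tendsto (fun m : ℕ => (m : ℝ) ^ k * (1 - sphMeasure ν m H))
        Filter.atTop (nhds 0)) :
    Filter.Tendsto (fun n : ℕ => sphMeasure μ n (f ⁻¹' H)) Filter.atTop (nhds 1) ∧
    ∀ k : ℕ,
      Filter.Tendsto (fun n : ℕ => (n : ℝ) ^ k * (1 - sphMeasure μ n (f ⁻¹' H)))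
        Filter.atTop (nhds 0) := by
  have hdensity : ∀ n, 1 ≤ n → ∀ x : List A, x.length = n →
      μ n x ≤ C * (n : ℝ) ^ c * ν n (f x) := by
    rintro n hn x rfl
    have hpos : 0 < C * (x.length : ℝ) ^ c := by positivity
    exact (div_le_iff₀' hpos).1 (hcm x (List.ne_nil_of_length_pos hn))
  have hbound : ∀ n, 1 ≤ n → 1 - sphMeasure μ n (f ⁻¹' H) ≤
      C * ((n : ℝ) ^ c * (1 - sphMeasure ν n H)) := by
    intro n hn
    rw [one_sub_sphMeasure μ n (hμsum n hn), one_sub_sphMeasure ν n (hνsum n hn), ← mul_assoc,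
      ← Set.preimage_compl]
    exact sphMeasure_preimage_le μ ν n hinj hlen (by positivity) (hνpos n hn) (hdensity n hn) _
  have hdecay : SuperpolynomialDecay atTop (fun n : ℕ => (n : ℝ))
      (fun n => 1 - sphMeasure μ n (f ⁻¹' H)) := by
    refine (superpolynomialDecay_zero _ _).trans_eventuallyLE
      (Eventually.of_forall fun n => Nat.cast_nonneg n)
      ((SuperpolynomialDecay.param_pow_mul hH₂ c).const_mul C) ?_ ?_
    all_goals filter_upwards [eventually_ge_atTop 1] with n hn
    · rw [Pi.zero_apply, one_sub_sphMeasure μ n (hμsum n hn)]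
      exact sphMeasure_nonneg μ n (hμpos n hn) _
    · exact hbound n hn
  exact ⟨by simpa using (hdecay 0).const_sub 1, hdecay⟩

/-- Let `Σ` (here `A`) and `Π` (here `B`) be finite nonempty alphabets,
`μ`, `ν` spherical ensembles of probability measures on `Σ*`, `Π*`, and
`f : Σ* → Π*` injective with `|f(x)| = |x|`.  Suppose there are a real `C > 0` and a
natural number `c` such that, with `d(k) := C·k^c`, one has
`ν_{|x|}(f(x)) ≥ μ_{|x|}(x)/d(|x|)` for every nonempty word `x`.  If `H ⊆ Π*` is
strongly generic with respect to `ν`, then `f⁻¹(H)` is strongly generic with respect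
to `μ`.  (Measure-theoretic content of part (b) of: CM-reductions are SGPtime
reductions.) -/
theorem cm_reduction_strongly_generic
    {A B : Type*} [Fintype A] [Nonempty A] [Fintype B] [Nonempty B]
    (μ : ℕ → List A → ℝ) (ν : ℕ → List B → ℝ)
    (hμpos : ∀ n : ℕ, 1 ≤ n → ∀ x : List A, x.length = n → 0 ≤ μ n x)
    (hμsum : ∀ n : ℕ, 1 ≤ n → ∑ w : Fin n → A, μ n (List.ofFn w) = 1)
    (hνpos : ∀ n : ℕ, 1 ≤ n → ∀ y : List B, y.length = n → 0 ≤ ν n y)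
    (hνsum : ∀ n : ℕ, 1 ≤ n → ∑ w : Fin n → B, ν n (List.ofFn w) = 1)
    (f : List A → List B)
    (hinj : Function.Injective f)
    (hlen : ∀ x : List A, (f x).length = x.length)
    (C : ℝ) (hC : 0 < C) (c : ℕ)
    (hcm : ∀ x : List A, x ≠ [] →
      μ x.length x / (C * (x.length : ℝ) ^ c) ≤ ν x.length (f x))
    (H : Set (List B))
    (hH₁ : Filter.Tendsto (fun m : ℕ => sphMeasure ν m H) Filter.atTop (nhds 1))
    (hH₂ : ∀ k : ℕ,
      Filter.Tendsto (fun m : ℕ => (m : ℝ) ^ k * (1 - sphMeasure ν m H))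
        Filter.atTop (nhds 0)) :
    Filter.Tendsto (fun n : ℕ => sphMeasure μ n (f ⁻¹' H)) Filter.atTop (nhds 1) ∧
    ∀ k : ℕ,
      Filter.Tendsto (fun n : ℕ => (n : ℝ) ^ k * (1 - sphMeasure μ n (f ⁻¹' H)))
        Filter.atTop (nhds 0) :=
  cm_reduction_strongly_generic_general μ ν hμpos hμsum hνpos hνsum f hinj hlen C hC c hcm H hH₂
end

section
/- For every n ≥ 1 and every probability function μ : {0,1}^n → ℝ (i.e., μ(x) ≥ 0 for all x and Σ_{x∈{0,1}^n} μ(x) = 1), there exists an injective map c : {0,1}^n → {0,1}* such that for every x ∈ {0,1}^n: |c(x)| ≤ n + 1 and μ(x) ≤ 4 · 2^{−|c(x)|}. (This is the content of the encoding x ↦ x'' used in the reduction of an arbitrary DistNP problem to the bounded halting problem.) -/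
/-!
Sort the words by decreasing probability and code each word by the binary expansion of its
rank `k < 2 ^ n`. Since the `k + 1` most likely words have total mass at most `1`, the word of
rank `k` has probability at most `1 / (k + 1)`, while its code has length `size k` with
`2 ^ size k ≤ 2 k + 1`.
-/

open Finset

theorem Nat.foldr_bit_bits (m : ℕ) : m.bits.foldr Nat.bit 0 = m := by
  induction m using Nat.binaryRec' with
  | zero => simp
  | bit b n h ih => rw [Nat.bits_append_bit n b h, List.foldr_cons, ih]

theorem Nat.bits_injective : Function.Injective Nat.bits :=
  Function.LeftInverse.injective Nat.foldr_bit_bits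

theorem Nat.two_pow_size_le (k : ℕ) : 2 ^ k.size ≤ 2 * k + 1 := by
  obtain hk | hk := Nat.eq_zero_or_pos k
  · simp [hk]
  · obtain ⟨s, hs⟩ := Nat.exists_eq_add_one_of_ne_zero (Nat.size_pos.2 hk).ne'
    have : 2 ^ s ≤ k := Nat.lt_size.1 (by omega)
    rw [hs, pow_succ]
    omega

theorem Antitone.add_one_nsmul_le_sum {M : Type*} [AddCommMonoid M] [PartialOrder M]
    [IsOrderedAddMonoid M] {N : ℕ} {w : Fin N → M} (hw : Antitone w) (hw0 : 0 ≤ w)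
    (i : Fin N) : ((i : ℕ) + 1) • w i ≤ ∑ j, w j :=
  calc ((i : ℕ) + 1) • w i = ∑ _j ∈ Iic i, w i := by simp [Fin.card_Iic]
    _ ≤ ∑ j ∈ Iic i, w j := sum_le_sum fun j hj => hw (mem_Iic.1 hj)
    _ ≤ ∑ j, w j := sum_le_sum_of_subset_of_nonneg (subset_univ _) fun j _ _ => hw0 j

theorem exists_equiv_fin_antitone {α β : Type*} [Fintype α] [LinearOrder β] (f : α → β) :
    ∃ e : Fin (Fintype.card α) ≃ α, Antitone (f ∘ e) := by
  let e₀ := (Fintype.equivFin α).symm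
  let g : Fin (Fintype.card α) → βᵒᵈ := OrderDual.toDual ∘ f ∘ e₀
  exact ⟨(Tuple.sort g).trans e₀, Tuple.monotone_sort g⟩

theorem exists_equiv_fin_add_one_mul_le_sum {α : Type*} [Fintype α] (μ : α → ℝ)
    (hμ : ∀ x, 0 ≤ μ x) :
    ∃ r : α ≃ Fin (Fintype.card α), ∀ x, ((r x : ℕ) + 1) * μ x ≤ ∑ y, μ y := by
  obtain ⟨e, he⟩ := exists_equiv_fin_antitone μ
  refine ⟨e.symm, fun x => ?_⟩
  simpa [nsmul_eq_mul, Equiv.sum_comp] using he.add_one_nsmul_le_sum (fun i => hμ _) (e.symm x)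

theorem le_two_div_two_pow_size {m : ℝ} {k : ℕ} (hm : 0 ≤ m) (h : (k + 1) * m ≤ 1) :
    m ≤ 2 / 2 ^ k.size := by
  have hsize : (2 : ℝ) ^ k.size ≤ 2 * k + 1 := by exact_mod_cast Nat.two_pow_size_le k
  rw [le_div_iff₀ (by positivity)]
  nlinarith

theorem exists_short_code_general
    (n : ℕ) (μ : (Fin n → Bool) → ℝ)
    (hpos : ∀ x : Fin n → Bool, 0 ≤ μ x)
    (hsum : ∑ x : Fin n → Bool, μ x = 1) :
    ∃ c : (Fin n → Bool) → List Bool, Function.Injective c ∧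
      ∀ x : Fin n → Bool,
        (c x).length ≤ n + 1 ∧ μ x ≤ 4 / 2 ^ (c x).length := by
  obtain ⟨r, hr⟩ := exists_equiv_fin_add_one_mul_le_sum μ hpos
  refine ⟨fun x => (r x : ℕ).bits,
    Nat.bits_injective.comp (Fin.val_injective.comp r.injective), fun x => ?_⟩
  rw [Nat.size_eq_bits_len]
  have hrank : (r x : ℕ) < 2 ^ n := by simpa using (r x).isLt
  refine ⟨(Nat.size_le.2 hrank).trans n.le_succ, ?_⟩
  calc μ x ≤ 2 / 2 ^ (r x : ℕ).size := le_two_div_two_pow_size (hpos x) (hsum ▸ hr x)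
    _ ≤ 4 / 2 ^ (r x : ℕ).size := by gcongr; norm_num

/-- For every `n ≥ 1` and every probability function `μ` on `{0,1}^n`
(`μ(x) ≥ 0`, `Σ_x μ(x) = 1`), there exists an injective map `c : {0,1}^n → {0,1}*`
such that for every `x ∈ {0,1}^n`: `|c(x)| ≤ n + 1` and `μ(x) ≤ 4·2^{−|c(x)|}`.
(Content of the encoding `x ↦ x''` used in the reduction of an arbitrary DistNP
problem to the bounded halting problem.)  Words in `{0,1}^n` are represented as
functions `Fin n → Bool`, and binary strings as lists of booleans. -/
theorem exists_short_code
    (n : ℕ) (hn : 1 ≤ n) (μ : (Fin n → Bool) → ℝ)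
    (hpos : ∀ x : Fin n → Bool, 0 ≤ μ x)
    (hsum : ∑ x : Fin n → Bool, μ x = 1) :
    ∃ c : (Fin n → Bool) → List Bool, Function.Injective c ∧
      ∀ x : Fin n → Bool,
        (c x).length ≤ n + 1 ∧ μ x ≤ 4 / 2 ^ (c x).length :=
  exists_short_code_general n μ hpos hsum
end

section
/- Let ν be the spherical ensemble of the distributional bounded halting problem on {0,1}*: ν_N(1^m 0 w) = 1/(N·2^{|w|}) for m + 1 + |w| = N, and ν_N(1^N) = 0. Let n ≥ 1, let p and s be binary words with |p| ≤ 2⌊log₂ n⌋ + 2, let N ≥ |p| + |s| + 2, and let r be a real number with 0 ≤ r ≤ 4·2^{−|s|}. Then the word u = 1^{N−|p|−|s|−2} 0 p 0 s has length N and satisfies ν_N(u) ≥ r/(32·n²·N). (This is the key measure-decrease inequality ν_{|f(x)|}(f(x)) ≥ μ_{|x|}(x)/(const·|x|²·g(|x|)) in the reduction to the bounded halting problem, with r = μ_{|x|}(x), s the encoding x'', p the encoding of n = |x|, and N = g(n).) -/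
/-- Let `ν` be the spherical ensemble of the distributional bounded
halting problem on `{0,1}*` (`ν(1^m 0 w) = 1/(N·2^{|w|})` for `N = m + 1 + |w|`, and
`ν(1^N) = 0`).  Let `n ≥ 1`, let `p` and `s` be binary words with
`|p| ≤ 2⌊log₂ n⌋ + 2`, let `N ≥ |p| + |s| + 2`, and let `r` be real with
`0 ≤ r ≤ 4·2^{−|s|}`.  Then the word `u = 1^{N−|p|−|s|−2} 0 p 0 s` has length `N`
and satisfies `ν(u) ≥ r/(32·n²·N)`.  (The key measure-decrease inequality in the
reduction to the bounded halting problem.)  Binary words are lists of booleans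
(`true` = 1, `false` = 0). -/
theorem dbh_measure_decrease
    (ν : List Bool → ℝ)
    (hν₀ : ∀ (m : ℕ) (w : List Bool),
      ν (List.replicate m true ++ false :: w) =
        1 / (((m : ℝ) + 1 + w.length) * 2 ^ w.length))
    (hν₁ : ∀ N : ℕ, ν (List.replicate N true) = 0)
    (n : ℕ) (hn : 1 ≤ n) (p s : List Bool)
    (hp : p.length ≤ 2 * Nat.log 2 n + 2)
    (N : ℕ) (hN : p.length + s.length + 2 ≤ N)
    (r : ℝ) (hr0 : 0 ≤ r) (hr : r ≤ 4 / 2 ^ s.length) :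
    (List.replicate (N - p.length - s.length - 2) true ++
        false :: (p ++ false :: s)).length = N ∧
    r / (32 * (n : ℝ) ^ 2 * N) ≤
      ν (List.replicate (N - p.length - s.length - 2) true ++
        false :: (p ++ false :: s)) := by
  have hw : (p ++ false :: s).length = p.length + 1 + s.length := by
    simp; omega
  have hm : N - p.length - s.length - 2 + 1 + (p.length + 1 + s.length) = N := by omega
  refine ⟨by simp [hw]; omega, ?_⟩
  rw [hν₀, hw]
  have hNcast : ((N - p.length - s.length - 2 : ℕ) : ℝ) + 1 + (p.length + 1 + s.length : ℕ) = N := by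
    exact_mod_cast congrArg (Nat.cast : ℕ → ℝ) hm
  push_cast at hNcast ⊢
  rw [hNcast]
  -- key combinatorial fact
  have hpow : (2 : ℝ) ^ p.length ≤ 4 * (n : ℝ) ^ 2 := by
    have h1 : 2 ^ p.length ≤ 2 ^ (2 * Nat.log 2 n + 2) := Nat.pow_le_pow_right (by norm_num) hp
    have h2 : 2 ^ Nat.log 2 n ≤ n := Nat.pow_log_le_self 2 (by omega)
    have h3 : 2 ^ (2 * Nat.log 2 n + 2) = 4 * (2 ^ Nat.log 2 n) ^ 2 := by ring
    have : (2:ℕ) ^ p.length ≤ 4 * n ^ 2 := by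
      rw [h3] at h1
      exact h1.trans (by have := Nat.pow_le_pow_left h2 2; omega)
    exact_mod_cast this
  have hNpos : (0 : ℝ) < N := by
    have : 1 ≤ N := by omega
    exact_mod_cast Nat.lt_of_lt_of_le Nat.zero_lt_one this
  have hnpos : (0 : ℝ) < n := by exact_mod_cast hn
  have hS : (0 : ℝ) < 2 ^ s.length := by positivity
  have hP : (0 : ℝ) < 2 ^ p.length := by positivity
  rw [div_le_div_iff₀ (by positivity) (by positivity)]
  have hrs : r * 2 ^ s.length ≤ 4 := (le_div_iff₀ hS).mp hr
  have hsplit : (2 : ℝ) ^ (p.length + 1 + s.length) = 2 ^ p.length * 2 * 2 ^ s.length := by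
    rw [pow_add, pow_add]; ring
  rw [hsplit]
  nlinarith [mul_le_mul hrs hpow (le_of_lt hP) (by norm_num : (0:ℝ) ≤ 4), mul_pos hNpos (mul_pos hS hP)]
end

section
/- Let a and b be real numbers with 0 ≤ a < b ≤ 1, and suppose k is the least natural number such that a < q/2^k ≤ b for some odd positive integer q. Then b − a < 2^{2−k}. (This yields the inequality μ_{|x|}(x) < 2·2^{−|x′|} used in the bounded-halting reduction, where x′ encodes the shortest dyadic rational in the interval (μ*(x), μ̂(x)].) -/
/-- Let `a`, `b` be reals with `0 ≤ a < b ≤ 1`, and suppose `k` is the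
least natural number such that `a < q/2^k ≤ b` for some odd positive integer `q`.
Then `b − a < 2^{2−k}` (i.e. `b − a < 4/2^k`).  (Yields the inequality
`μ_{|x|}(x) < 2·2^{−|x′|}` used in the bounded-halting reduction.) -/
theorem shortest_dyadic_gap_bound
    (a b : ℝ) (ha : 0 ≤ a) (hab : a < b) (hb : b ≤ 1) (k : ℕ)
    (hex : ∃ q : ℕ, Odd q ∧ 0 < q ∧ a < (q : ℝ) / 2 ^ k ∧ (q : ℝ) / 2 ^ k ≤ b)
    (hmin : ∀ k' : ℕ, k' < k →
      ¬ ∃ q : ℕ, Odd q ∧ 0 < q ∧ a < (q : ℝ) / 2 ^ k' ∧ (q : ℝ) / 2 ^ k' ≤ b) :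
    b - a < 4 / 2 ^ k := by
  by_contra h
  push_neg at h
  cases k with
  | zero =>
    simp only [pow_zero, div_one] at h
    linarith
  | succ k' =>
    apply hmin k' (Nat.lt_succ_self k')
    have hpow : (0:ℝ) < 2 ^ k' := by positivity
    have hlen : 2 / 2 ^ k' ≤ b - a := by
      have h2 : (4:ℝ) / 2 ^ (k'+1) = 2 / 2 ^ k' := by
        rw [pow_succ]; ring
      linarith [h2 ▸ h]
    have hlen' : a * 2 ^ k' + 2 ≤ b * 2 ^ k' := by
      have := (div_le_iff₀ hpow).mp (by linarith : 2 / 2 ^ k' ≤ b - a)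
      nlinarith
    set m : ℕ := Nat.floor (a * 2 ^ k') + 1 with hm
    have hfl : ((m - 1 : ℕ) : ℝ) ≤ a * 2 ^ k' := by
      simp [hm]
      exact Nat.floor_le (by positivity)
    have hfl2 : a * 2 ^ k' < (m : ℝ) := by
      have := Nat.lt_floor_add_one (a * 2 ^ k')
      push_cast [hm]; push_cast at this; linarith
    have hub : ((m : ℝ) + 1) ≤ b * 2 ^ k' := by
      have : ((m - 1 : ℕ) : ℝ) = (m : ℝ) - 1 := by
        simp [hm]
      linarith [hfl, hlen', this ▸ hfl]
    have hcast : ((m + 1 : ℕ) : ℝ) = (m : ℝ) + 1 := by push_cast; ring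
    rcases Nat.even_or_odd m with he | ho
    · refine ⟨m + 1, Even.add_one he, by omega, ?_, ?_⟩
      · rw [lt_div_iff₀ hpow, hcast]; linarith
      · rw [div_le_iff₀ hpow, hcast]; linarith
    · refine ⟨m, ho, by omega, ?_, ?_⟩
      · rw [lt_div_iff₀ hpow]; linarith
      · rw [div_le_iff₀ hpow]; linarith
end
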